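/- arXiv:2310.00479 — 2 statements merged into one kernel-verified Lean document; each statement's English description precedes it below -/
import Mathlib

section
/- Let A be a Noetherian local ring and let T = Â be its completion. If A is reduced and all fiber rings T ⊗_A κ(P) for P ∈ Spec(A) are reduced (where κ(P) = A_P/PA_P), then T is reduced. -/
/-!
A reduced ring embeds into the product of the residue fields at its minimal primes, of which a
Noetherian ring has finitely many. Tensoring this embedding with the flat `A`-algebra `Â` embeds `Â`
into the finite product of the fibers `Â ⊗_A κ(P)`, which are reduced.
-/

open IsLocalRing TensorProduct

instance Ideal.isPrime_of_mem_minimalPrimes {R : Type*} [CommSemiring R] (P : minimalPrimes R) :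
    (P : Ideal R).IsPrime :=
  IsMinimalPrime.isPrime P.2

theorem minimalPrimes.algebraMap_pi_residueField_injective (A : Type*) [CommRing A]
    [IsReduced A] :
    Function.Injective (algebraMap A (∀ P : minimalPrimes A, (P : Ideal A).ResidueField)) := by
  refine (injective_iff_map_eq_zero _).2 fun a ha => ?_
  have hmem : ∀ P : minimalPrimes A, a ∈ (P : Ideal A) := fun P =>
    Ideal.algebraMap_residueField_eq_zero.1 (congrFun ha P)
  have : a ∈ sInf (minimalPrimes A) := Ideal.mem_sInf.2 fun P hP => hmem ⟨P, hP⟩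
  rwa [Ideal.sInf_minimalPrimes, Ideal.radical_bot_of_isReduced, Ideal.mem_bot] at this

theorem isReduced_of_flat_of_isReduced_tensorProduct {A B ι : Type*} [CommSemiring A]
    [Semiring B] [Algebra A B] [Module.Flat A B] [Finite ι] (K : ι → Type*)
    [∀ i, Semiring (K i)] [∀ i, Algebra A (K i)]
    (hK : Function.Injective (algebraMap A (∀ i, K i))) [∀ i, IsReduced (B ⊗[A] K i)] :
    IsReduced B := by
  have := Fintype.ofFinite ι
  classical
  let e := Algebra.TensorProduct.piRight A A B K
  exact isReduced_of_injective (e.toAlgHom.comp (Algebra.TensorProduct.includeLeft (S := A)))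
    (e.injective.comp (Algebra.TensorProduct.includeLeft_injective (S := A) hK))

/-- If a Noetherian local ring `A` is reduced and all fiber rings
`Â ⊗_A κ(P)` of the completion map are reduced, then the completion `Â` is reduced. -/
theorem isReduced_adicCompletion_of_reduced_fibers (A : Type) [CommRing A]
    [IsNoetherianRing A] [IsLocalRing A] [IsReduced A]
    (h : ∀ (P : Ideal A) [P.IsPrime],
      IsReduced (TensorProduct A (AdicCompletion (maximalIdeal A) A)
        (ResidueField (Localization.AtPrime P)))) :
    IsReduced (AdicCompletion (maximalIdeal A) A) := by
  have := (minimalPrimes.finite_of_isNoetherianRing A).to_subtype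
  have (P : minimalPrimes A) := h P
  exact isReduced_of_flat_of_isReduced_tensorProduct _
    (minimalPrimes.algebraMap_pi_residueField_injective A)
end

section
/- Let A ⊆ T be a ring extension of Noetherian rings, S = A \ {0} with A a domain, and suppose that a prime Q of T satisfies Q ∩ A = (0) if and only if Q is a minimal prime of T. If T is reduced, then the localization S⁻¹T is a regular ring (i.e., all its localizations at primes are regular local rings, in fact fields). -/
open IsLocalRing

/-- A ring is a regular local ring if it is Noetherian and local and its maximal
ideal has a generating set of cardinality equal to its Krull dimension. -/
def IsRegLocalRing (R : Type) [CommRing R] : Prop :=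
  IsNoetherianRing R ∧ ∃ _ : IsLocalRing R, ∃ s : Finset R,
    Ideal.span (s : Set R) = maximalIdeal R ∧ (s.card : WithBot ℕ∞) = ringKrullDim R

/-- A commutative ring is regular if all its localizations at primes are regular
local rings. -/
def IsRegRing (R : Type) [CommRing R] : Prop :=
  ∀ P : PrimeSpectrum R, IsRegLocalRing (Localization.AtPrime P.asIdeal)

/-! A prime `P` of `M⁻¹T` contracts to a prime of `T` disjoint from `M`, which the hypothesis
makes minimal; since `(M⁻¹T)_P` is the localization of `T` at that contraction, it has a single
prime ideal, and being reduced it is a field. A field is a regular local ring: its maximal ideal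
is generated by the empty set and its Krull dimension is `0`. -/

theorem IsField.isRegLocalRing {R : Type} [CommRing R] (hR : IsField R) : IsRegLocalRing R := by
  let := hR.toField
  refine ⟨inferInstance, inferInstance, ∅, ?_, ?_⟩
  · simp [maximalIdeal_eq_bot]
  · simp

theorem isField_localization_atPrime_of_forall_disjoint_mem_minimalPrimes {R : Type*} [CommRing R]
    [IsReduced R] (M : Submonoid R)
    (hM : ∀ Q : Ideal R, Q.IsPrime → Disjoint (M : Set R) Q → Q ∈ minimalPrimes R)
    (P : Ideal (Localization M)) [P.IsPrime] : IsField (Localization.AtPrime P) := by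
  have hP := (IsLocalization.isPrime_iff_isPrime_disjoint M (Localization M) P).mp ‹_›
  have : Ring.KrullDimLE 0 (Localization.AtPrime P) :=
    .of_isLocalization _ (hM _ hP.1 hP.2) _
  exact Ring.KrullDimLE.isField_of_isReduced

theorem isRegRing_localization_nonZeroDivisors_general (A T : Type) [CommRing A] [IsDomain A]
    [CommRing T] [IsReduced T]
    (f : A →+* T)
    (hmin : ∀ (Q : Ideal T) [Q.IsPrime],
      (∀ a : A, f a ∈ Q → a = 0) ↔ Q ∈ minimalPrimes T) :
    IsRegRing (Localization (Submonoid.map f (nonZeroDivisors A))) ∧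
      ∀ P : PrimeSpectrum (Localization (Submonoid.map f (nonZeroDivisors A))),
        IsField (Localization.AtPrime P.asIdeal) := by
  have hdisjoint : ∀ Q : Ideal T, Q.IsPrime →
      Disjoint (Submonoid.map f (nonZeroDivisors A) : Set T) Q → Q ∈ minimalPrimes T := by
    intro Q _ hQ
    refine (hmin Q).mp fun a ha => by_contra fun ha0 => ?_
    exact Set.disjoint_left.mp hQ ⟨a, mem_nonZeroDivisors_of_ne_zero ha0, rfl⟩ ha
  have hfield P := isField_localization_atPrime_of_forall_disjoint_mem_minimalPrimes _
    hdisjoint (PrimeSpectrum.asIdeal P)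
  exact ⟨fun P => (hfield P).isRegLocalRing, hfield⟩

/-- Let `A ⊆ T` be Noetherian rings with `A` a domain and `S = A \ {0}`, such that a
prime `Q` of `T` contracts to `(0)` iff `Q` is a minimal prime of `T`.  If `T` is
reduced, then `S⁻¹T` is a regular ring, and in fact all of its localizations at
primes are fields. -/
theorem isRegRing_localization_nonZeroDivisors (A T : Type) [CommRing A] [IsDomain A]
    [IsNoetherianRing A] [CommRing T] [IsNoetherianRing T] [IsReduced T]
    (f : A →+* T) (hf : Function.Injective f)
    (hmin : ∀ (Q : Ideal T) [Q.IsPrime],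
      (∀ a : A, f a ∈ Q → a = 0) ↔ Q ∈ minimalPrimes T) :
    IsRegRing (Localization (Submonoid.map f (nonZeroDivisors A))) ∧
      ∀ P : PrimeSpectrum (Localization (Submonoid.map f (nonZeroDivisors A))),
        IsField (Localization.AtPrime P.asIdeal) :=
  isRegRing_localization_nonZeroDivisors_general A T f hmin
end
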